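/- Under FA* dynamics with Z(0) full column rank, the total increase of the loss is bounded: for all T ≥ 0, ∫₀ᵀ (dℓ/dt)·𝟙[dℓ/dt ≥ 0] dt ≤ r·λᵣ(A(0))²·λ₁(Z(0)ᵀZ(0))², where ℓ(t) = ‖(Y − Ŷ(t))Cᵀ(Z(t)ᵀZ(t))^{-1/2}‖_F², A(0) is the initial alignment matrix, λᵣ its minimum eigenvalue, and λ₁(Z(0)ᵀZ(0)) the top eigenvalue of Z(0)ᵀZ(0). -/

import Mathlib

/-!
Along the flow `Ż = (Y - Z W) Cᵀ` the normal equations give `Zᵀ Ż = 0` as long as `ZᵀZ` is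
invertible, so the Gram matrix `ZᵀZ` never moves. Whitening by `S = (ZᵀZ)^{-1/2}` turns `Z` into
an orthonormal frame `U = Z S` driven by `U̇ = (1 - U Uᵀ) K` with `K = Y Cᵀ S`. The loss is
`‖(1 - U Uᵀ) K‖²`, its derivative is `-tr (Â M)` with `M = U̇ᵀ U̇ ⪰ 0`, and the whitened alignment
`Â = Kᵀ U + Uᵀ K = S⁻¹ A S⁻¹` satisfies `Â' = 2 M`. Hence `Â` increases in the Loewner order,
starting above `μ = min λᵣ 0 · λ₁`, and it stays below some constant `Λ`.

With `B = (Λ - Â) / (Λ - μ)`, whose spectrum lies in `[0, 1]`, Bernoulli's inequality gives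
`x + (-μ) ((Λ - x) / (Λ - μ))^κ ≥ 0` on `[μ, Λ]` once `κ (-μ) ≤ Λ - μ`. Therefore the positive
part of `ℓ'` is at most `(-μ) tr (B^κ M)`, the derivative of `-c tr B^{κ+1}` with
`c = (-μ) (Λ - μ) / (2 (κ + 1))`, and this Lyapunov function increases by at most `c r ≤ r μ²`
when `κ ≈ (Λ - μ) / (-μ)`.
-/

open Matrix MeasureTheory

open scoped MatrixOrder

namespace FeedbackAlignment

def HasMatrixDerivAt {m n : Type*} (F : ℝ → Matrix m n ℝ) (F' : Matrix m n ℝ) (t : ℝ) : Prop :=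
  ∀ i j, HasDerivAt (fun s => F s i j) (F' i j) t

namespace HasMatrixDerivAt

section

variable {l m n : Type*} {F G : ℝ → Matrix m n ℝ} {F' G' : Matrix m n ℝ} {t : ℝ}

lemma hasDerivAt_of_symm [Fintype m] [Fintype n] (hF : HasMatrixDerivAt F F' t) :
    HasDerivAt (fun s => of.symm (F s)) (of.symm F') t :=
  hasDerivAt_pi.2 fun i => hasDerivAt_pi.2 fun j => hF i j

lemma continuous {F' : ℝ → Matrix m n ℝ} (hF : ∀ t, HasMatrixDerivAt F (F' t) t) :
    Continuous F :=
  continuous_matrix fun i j => continuous_iff_continuousAt.2 fun t => (hF t i j).continuousAt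

lemma add (hF : HasMatrixDerivAt F F' t) (hG : HasMatrixDerivAt G G' t) :
    HasMatrixDerivAt (fun s => F s + G s) (F' + G') t :=
  fun i j => (hF i j).add (hG i j)

lemma const_sub (K : Matrix m n ℝ) (hF : HasMatrixDerivAt F F' t) :
    HasMatrixDerivAt (fun s => K - F s) (-F') t :=
  fun i j => by simpa using (hF i j).const_sub (K i j)

lemma const_smul (c : ℝ) (hF : HasMatrixDerivAt F F' t) :
    HasMatrixDerivAt (fun s => c • F s) (c • F') t :=
  fun i j => (hF i j).const_mul c

lemma transpose (hF : HasMatrixDerivAt F F' t) :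
    HasMatrixDerivAt (fun s => (F s)ᵀ) F'ᵀ t :=
  fun i j => hF j i

lemma mul [Fintype m] {F : ℝ → Matrix l m ℝ} {G : ℝ → Matrix m n ℝ} {F' G'}
    (hF : HasMatrixDerivAt F F' t) (hG : HasMatrixDerivAt G G' t) :
    HasMatrixDerivAt (fun s => F s * G s) (F' * G t + F t * G') t := fun i j => by
  simpa only [mul_apply, Matrix.add_apply, Finset.sum_add_distrib] using
    HasDerivAt.fun_sum (u := Finset.univ) fun k _ => (hF i k).fun_mul (hG k j)

lemma mul_const [Fintype m] {F : ℝ → Matrix l m ℝ} {F'} (hF : HasMatrixDerivAt F F' t)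
    (K : Matrix m n ℝ) : HasMatrixDerivAt (fun s => F s * K) (F' * K) t := fun i j => by
  simpa only [mul_apply] using HasDerivAt.fun_sum fun k _ => (hF i k).mul_const (K k j)

lemma trace [Fintype m] {F : ℝ → Matrix m m ℝ} {F'} (hF : HasMatrixDerivAt F F' t) :
    HasDerivAt (fun s => (F s).trace) F'.trace t :=
  HasDerivAt.fun_sum fun i _ => hF i i

lemma dotProduct_mulVec [Fintype m] {F : ℝ → Matrix m m ℝ} {F'} (hF : HasMatrixDerivAt F F' t)
    (x : m → ℝ) : HasDerivAt (fun s => x ⬝ᵥ F s *ᵥ x) (x ⬝ᵥ F' *ᵥ x) t := by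
  simpa only [dotProduct, mulVec] using HasDerivAt.fun_sum fun i _ =>
    (HasDerivAt.fun_sum fun j _ => (hF i j).mul_const (x j)).const_mul (x i)

lemma monotone [Fintype m] {F F' : ℝ → Matrix m m ℝ} (hF : ∀ t, HasMatrixDerivAt F (F' t) t)
    (hF_herm : ∀ t, (F t).IsHermitian) (hF' : ∀ t, 0 ≤ F' t) : Monotone F := by
  intro a b hab
  refine PosSemidef.of_dotProduct_mulVec_nonneg ((hF_herm b).sub (hF_herm a)) fun x => ?_
  have hq : Monotone fun s => x ⬝ᵥ F s *ᵥ x :=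
    monotone_of_hasDerivAt_nonneg (fun s => (hF s).dotProduct_mulVec x) fun s => by
      simpa using (hF' s).posSemidef.dotProduct_mulVec_nonneg x
  simpa [sub_mulVec, dotProduct_sub] using hq hab

lemma eq_of_deriv_eq_zero_of_isOpen [Fintype m] [Fintype n] {F' : ℝ → Matrix m n ℝ}
    (hF : ∀ t, HasMatrixDerivAt F (F' t) t) {s : Set ℝ} (hs : IsOpen s) {t₀ : ℝ}
    (hs_level : ∀ t, F t = F t₀ → t ∈ s) (hF' : ∀ t ∈ s, F' t = 0) (t : ℝ) : F t = F t₀ := by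
  have hlevel : {t | F t = F t₀} = s ∩ (fun t => of.symm (F t)) ⁻¹' {of.symm (F t₀)} := by
    ext t
    exact ⟨fun ht => ⟨hs_level t ht, congrArg of.symm ht⟩, fun ht => of.symm.injective ht.2⟩
  have hclopen : IsClopen {t | F t = F t₀} := by
    refine ⟨isClosed_eq (continuous hF) continuous_const, hlevel ▸ ?_⟩
    refine hs.isOpen_inter_preimage_of_deriv_eq_zero
      (fun t _ => (hF t).hasDerivAt_of_symm.differentiableAt.differentiableWithinAt)
      (fun t ht => ?_) _
    simpa [hF' t ht] using (hF t).hasDerivAt_of_symm.deriv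
  exact Set.eq_univ_iff_forall.1 (hclopen.eq_univ ⟨t₀, rfl⟩) t

end

variable {m : Type*} [Fintype m] [DecidableEq m] {F : ℝ → Matrix m m ℝ} {F' : Matrix m m ℝ}
  {t : ℝ}

lemma pow (hF : HasMatrixDerivAt F F' t) (p : ℕ) :
    HasMatrixDerivAt (fun s => F s ^ p)
      (∑ i ∈ Finset.range p, F t ^ i * F' * F t ^ (p - 1 - i)) t := by
  induction p with
  | zero => exact fun i j => by simpa using hasDerivAt_const t _
  | succ q ih =>
    have hsum : (∑ i ∈ Finset.range q, F t ^ i * F' * F t ^ (q - 1 - i)) * F t + F t ^ q * F' =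
        ∑ i ∈ Finset.range (q + 1), F t ^ i * F' * F t ^ (q + 1 - 1 - i) := by
      rw [Finset.sum_range_succ, Finset.sum_mul, Nat.add_sub_cancel, Nat.sub_self, pow_zero,
        Matrix.mul_one]
      congr 1
      refine Finset.sum_congr rfl fun i hi => ?_
      have : q - 1 - i + 1 = q - i := by have := Finset.mem_range.1 hi; omega
      rw [Matrix.mul_assoc, ← pow_succ, this]
    simpa only [pow_succ, hsum] using ih.mul hF

lemma trace_pow_succ (hF : HasMatrixDerivAt F F' t) (p : ℕ) :
    HasDerivAt (fun s => (F s ^ (p + 1)).trace) ((p + 1) * (F t ^ p * F').trace) t := by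
  convert (hF.pow (p + 1)).trace using 1
  rw [trace_sum, Finset.sum_congr rfl fun i hi => ?_, Finset.sum_const, Finset.card_range,
    nsmul_eq_mul, Nat.cast_succ]
  rw [Nat.add_sub_cancel, trace_mul_cycle, ← pow_add,
    Nat.sub_add_cancel (Finset.mem_range_succ_iff.1 hi)]

end HasMatrixDerivAt

section Loewner

variable {n : Type*} [Fintype n] [DecidableEq n]

lemma trace_mul_nonneg {X Y : Matrix n n ℝ} (hX : 0 ≤ X) (hY : 0 ≤ Y) : 0 ≤ (X * Y).trace := by
  rw [← CFC.sqrt_mul_sqrt_self Y, ← Matrix.mul_assoc, trace_mul_cycle]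
  exact (IsSelfAdjoint.conjugate_nonneg hX
    (CFC.sqrt_nonneg Y).isSelfAdjoint).posSemidef.trace_nonneg

lemma trace_pow_le_card {B : Matrix n n ℝ} (hB0 : 0 ≤ B) (hB1 : B ≤ 1) (p : ℕ) :
    (B ^ p).trace ≤ Fintype.card n := by
  have hsa : IsSelfAdjoint B := hB0.isSelfAdjoint
  have hspec : ∀ x ∈ spectrum ℝ B, 0 ≤ x ∧ x ≤ 1 := fun x hx =>
    ⟨(StarOrderedRing.nonneg_iff_spectrum_nonneg B).1 hB0 x hx, (CFC.le_one_iff B).1 hB1 x hx⟩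
  have hp : B ^ p ≤ 1 := by
    rw [← cfc_pow_id (R := ℝ) B p]
    exact cfc_le_one _ B fun x hx => pow_le_one₀ (hspec x hx).1 (hspec x hx).2
  simpa [trace_sub, sub_nonneg] using (sub_nonneg.2 hp).posSemidef.trace_nonneg

lemma _root_.Matrix.IsHermitian.algebraMap_iInf_eigenvalues_le {A : Matrix n n ℝ}
    (hA : A.IsHermitian) : algebraMap ℝ _ (⨅ i, hA.eigenvalues i) ≤ A := by
  refine algebraMap_le_of_le_spectrum (fun x hx => ?_) hA
  obtain ⟨i, rfl⟩ := hA.spectrum_real_eq_range_eigenvalues ▸ hx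
  exact ciInf_le (Set.finite_range _).bddBelow i

lemma _root_.Matrix.IsHermitian.le_algebraMap_iSup_eigenvalues {A : Matrix n n ℝ}
    (hA : A.IsHermitian) : A ≤ algebraMap ℝ _ (⨆ i, hA.eigenvalues i) := by
  refine le_algebraMap_of_spectrum_le (fun x hx => ?_) hA
  obtain ⟨i, rfl⟩ := hA.spectrum_real_eq_range_eigenvalues ▸ hx
  exact le_ciSup (Set.finite_range _).bddAbove i

lemma _root_.Matrix.IsHermitian.exists_le_algebraMap {A : Matrix n n ℝ} (hA : A.IsHermitian)
    (a : ℝ) : ∃ Λ, a < Λ ∧ A ≤ algebraMap ℝ _ Λ := by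
  refine ⟨max a (⨆ i, hA.eigenvalues i) + 1, by linarith [le_max_left a (⨆ i, hA.eigenvalues i)],
    le_algebraMap_of_spectrum_le (fun x hx => ?_) hA⟩
  obtain ⟨i, rfl⟩ := hA.spectrum_real_eq_range_eigenvalues ▸ hx
  linarith [le_ciSup (Set.finite_range hA.eigenvalues).bddAbove i,
    le_max_right a (⨆ i, hA.eigenvalues i)]

lemma algebraMap_min_mul_le {S X : Matrix n n ℝ} (hS : IsSelfAdjoint S) (hS_det : IsUnit S.det)
    {a b : ℝ} (ha : algebraMap ℝ _ a ≤ S * X * S) (hb : (S * S)⁻¹ ≤ algebraMap ℝ _ b) :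
    algebraMap ℝ _ (min a 0 * b) ≤ X := by
  have hSinv : IsSelfAdjoint S⁻¹ := by
    rw [IsSelfAdjoint, star_eq_conjTranspose, conjTranspose_nonsing_inv, ← star_eq_conjTranspose,
      hS.star_eq]
  have hP : 0 ≤ (S * S)⁻¹ := by
    simpa only [Matrix.mul_inv_rev, hSinv.star_eq] using star_mul_self_nonneg S⁻¹
  have hX : a • (S * S)⁻¹ ≤ X := by
    convert hSinv.conjugate_le_conjugate ha using 1
    · rw [Algebra.algebraMap_eq_smul_one, Matrix.mul_smul, Matrix.smul_mul, Matrix.mul_one,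
        Matrix.mul_inv_rev]
    · rw [Matrix.mul_assoc, Matrix.mul_assoc, mul_nonsing_inv _ hS_det, Matrix.mul_one,
        ← Matrix.mul_assoc, nonsing_inv_mul _ hS_det, Matrix.one_mul]
  refine le_trans ?_ hX
  rw [← sub_nonneg]
  have h := add_nonneg (smul_nonneg (sub_nonneg.2 (min_le_left a 0)) hP)
    (smul_nonneg (neg_nonneg.2 (min_le_right a 0)) (sub_nonneg.2 hb))
  convert h using 1
  simp only [Algebra.algebraMap_eq_smul_one]
  module

end Loewner

section Lyapunov

lemma neg_le_mul_pow_of_nat_mul_le {μ Λ x : ℝ} {κ : ℕ} (hμ : μ ≤ 0) (hμΛ : μ < Λ)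
    (hκ : κ * -μ ≤ Λ - μ) (hμx : μ ≤ x) (hxΛ : x ≤ Λ) :
    -x ≤ -μ * ((Λ - μ)⁻¹ * (Λ - x)) ^ κ := by
  have hΛμ : 0 < Λ - μ := sub_pos.2 hμΛ
  rcases le_or_gt 0 x with hx | hx
  · have : 0 ≤ (Λ - μ)⁻¹ * (Λ - x) := mul_nonneg (inv_nonneg.2 hΛμ.le) (by linarith)
    nlinarith [pow_nonneg this κ]
  set u := (Λ - μ)⁻¹ * (x - μ)
  have hu : (Λ - μ)⁻¹ * (Λ - x) = 1 + -u := by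
    simp only [u]
    field_simp
    ring
  have hκu : κ * -μ * u ≤ x - μ := by
    calc κ * -μ * u ≤ (Λ - μ) * u := mul_le_mul_of_nonneg_right hκ (by positivity)
      _ = x - μ := by simp only [u]; field_simp
  have hu1 : u ≤ 1 := by
    rw [inv_mul_le_one₀ hΛμ]
    linarith
  have bernoulli := one_add_mul_le_pow (a := -u) (by linarith) κ
  rw [hu]
  nlinarith

lemma exists_nat_mul_le {μ Λ : ℝ} (hμ : μ ≤ 0) (hμΛ : μ < Λ) :
    ∃ κ : ℕ, κ * -μ ≤ Λ - μ ∧ -μ * (Λ - μ) / (2 * (κ + 1)) ≤ μ ^ 2 := by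
  rcases hμ.lt_or_eq with hμ | rfl
  · refine ⟨⌊(Λ - μ) / -μ⌋₊, ?_, ?_⟩
    · exact (le_div_iff₀ (neg_pos.2 hμ)).1 (Nat.floor_le (div_nonneg (by linarith) (by linarith)))
    · have := (div_lt_iff₀ (neg_pos.2 hμ)).1 (Nat.lt_floor_add_one ((Λ - μ) / -μ))
      rw [div_le_iff₀ (by positivity)]
      nlinarith
  · exact ⟨0, by simp; linarith, by simp⟩

variable {n : Type*} [Fintype n] [DecidableEq n]

lemma nonneg_add_smul_pow {A : Matrix n n ℝ} (hA : A.IsHermitian) {μ Λ : ℝ} {κ : ℕ}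
    (hμ : μ ≤ 0) (hμΛ : μ < Λ) (hκ : κ * -μ ≤ Λ - μ) (hμA : algebraMap ℝ _ μ ≤ A)
    (hAΛ : A ≤ algebraMap ℝ _ Λ) :
    0 ≤ A + -μ • ((Λ - μ)⁻¹ • (algebraMap ℝ _ Λ - A)) ^ κ := by
  have hsa : IsSelfAdjoint A := hA
  rw [algebraMap_le_iff_le_spectrum] at hμA
  rw [le_algebraMap_iff_spectrum_le] at hAΛ
  have : A + -μ • ((Λ - μ)⁻¹ • (algebraMap ℝ _ Λ - A)) ^ κ =
      cfc (fun x => x + -μ * ((Λ - μ)⁻¹ * (Λ - x)) ^ κ) A := by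
    rw [cfc_add .., cfc_id' .., cfc_const_mul .., cfc_pow .., cfc_const_mul .., cfc_sub ..,
      cfc_const .., cfc_id' ..]
  rw [this]
  exact cfc_nonneg fun x hx => by
    linarith [neg_le_mul_pow_of_nat_mul_le hμ hμΛ hκ (hμA x hx) (hAΛ x hx)]

lemma max_neg_trace_mul_le {A M : Matrix n n ℝ} (hA : A.IsHermitian) (hM : 0 ≤ M) {μ Λ : ℝ}
    {κ : ℕ} (hμ : μ ≤ 0) (hμΛ : μ < Λ) (hκ : κ * -μ ≤ Λ - μ) (hμA : algebraMap ℝ _ μ ≤ A)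
    (hAΛ : A ≤ algebraMap ℝ _ Λ) :
    max (-(A * M).trace) 0 ≤ -μ * (((Λ - μ)⁻¹ • (algebraMap ℝ _ Λ - A)) ^ κ * M).trace := by
  set P := ((Λ - μ)⁻¹ • (algebraMap ℝ _ Λ - A)) ^ κ
  have hP : 0 ≤ P :=
    ((smul_nonneg (inv_nonneg.2 (sub_pos.2 hμΛ).le) (sub_nonneg.2 hAΛ)).posSemidef.pow κ).nonneg
  have hAP := trace_mul_nonneg (nonneg_add_smul_pow hA hμ hμΛ hκ hμA hAΛ) hM
  rw [Matrix.add_mul, trace_add, smul_mul, trace_smul, smul_eq_mul] at hAP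
  exact max_le (by linarith) (mul_nonneg (neg_nonneg.2 hμ) (trace_mul_nonneg hP hM))

theorem integral_le_card_mul_sq {A M : ℝ → Matrix n n ℝ} {φ : ℝ → ℝ} {μ Λ T : ℝ}
    (hA : ∀ t, HasMatrixDerivAt A ((2 : ℝ) • M t) t) (hA_herm : ∀ t, (A t).IsHermitian)
    (hM : ∀ t, 0 ≤ M t) (hμ : μ ≤ 0) (hμΛ : μ < Λ) (hμA : algebraMap ℝ _ μ ≤ A 0)
    (hAΛ : ∀ t, A t ≤ algebraMap ℝ _ Λ) (hT : 0 ≤ T) (hφ : IntervalIntegrable φ volume 0 T)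
    (hφA : ∀ t, φ t ≤ max (-(A t * M t).trace) 0) :
    ∫ t in 0..T, φ t ≤ Fintype.card n * μ ^ 2 := by
  obtain ⟨κ, hκ, hκμ⟩ := exists_nat_mul_le hμ hμΛ
  have hΛμ : 0 < Λ - μ := sub_pos.2 hμΛ
  set B : ℝ → Matrix n n ℝ := fun t => (Λ - μ)⁻¹ • (algebraMap ℝ _ Λ - A t)
  set c := -μ * (Λ - μ) / (2 * (κ + 1))
  have hB : ∀ t, HasMatrixDerivAt B (-(2 / (Λ - μ)) • M t) t := fun t => by
    convert ((hA t).const_sub (algebraMap ℝ _ Λ)).const_smul (Λ - μ)⁻¹ using 1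
    ext i j
    simp [div_eq_inv_mul]
    ring
  have hg : ∀ t, HasDerivAt (fun s => -c * (B s ^ (κ + 1)).trace)
      (-μ * (B t ^ κ * M t).trace) t := fun t => by
    refine (((hB t).trace_pow_succ κ).const_mul (-c)).congr_deriv ?_
    rw [Matrix.mul_smul, trace_smul, smul_eq_mul]
    simp only [c]
    field_simp
  have hB0 : ∀ t, 0 ≤ B t := fun t => smul_nonneg (inv_nonneg.2 hΛμ.le) (sub_nonneg.2 (hAΛ t))
  have hB1 : B 0 ≤ 1 := by
    rw [← sub_nonneg]
    convert smul_nonneg (inv_nonneg.2 hΛμ.le) (sub_nonneg.2 hμA) using 1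
    simp only [B, Algebra.algebraMap_eq_smul_one]
    match_scalars <;> field_simp
    ring
  have hmono := HasMatrixDerivAt.monotone hA hA_herm fun t => smul_nonneg zero_le_two (hM t)
  calc ∫ t in 0..T, φ t ≤ -c * (B T ^ (κ + 1)).trace - -c * (B 0 ^ (κ + 1)).trace := by
        refine intervalIntegral.integral_le_sub_of_hasDeriv_right_of_le hT
          (fun t _ => (hg t).continuousAt.continuousWithinAt) (fun t _ => (hg t).hasDerivWithinAt)
          ((intervalIntegrable_iff_integrableOn_Icc_of_le hT).1 hφ) fun t ht => ?_
        exact (hφA t).trans (max_neg_trace_mul_le (hA_herm t) (hM t) hμ hμΛ hκ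
          (hμA.trans (hmono ht.1.le)) (hAΛ t))
    _ ≤ c * Fintype.card n := by
        have := trace_pow_le_card (hB0 0) hB1 (κ + 1)
        have := ((hB0 T).posSemidef.pow (κ + 1)).trace_nonneg
        have : 0 ≤ c := div_nonneg (mul_nonneg (neg_nonneg.2 hμ) hΛμ.le) (by positivity)
        nlinarith
    _ ≤ Fintype.card n * μ ^ 2 := by
        rw [mul_comm]
        exact mul_le_mul_of_nonneg_left hκμ (Nat.cast_nonneg _)

end Lyapunov

section Whitened

variable {n r : Type*} [Fintype n]

def whitenedAlignment (U K : Matrix n r ℝ) : Matrix r r ℝ := Kᵀ * U + Uᵀ * K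

lemma whitenedAlignment_isHermitian (U K : Matrix n r ℝ) :
    (whitenedAlignment U K).IsHermitian := by
  simp [whitenedAlignment, IsHermitian, conjTranspose_eq_transpose_of_trivial, transpose_add,
    add_comm]

variable [Fintype r]

def whitenedResidual (U K : Matrix n r ℝ) : Matrix n r ℝ := K - U * (Uᵀ * K)

lemma sum_sq_eq_trace_transpose_mul_self (X : Matrix n r ℝ) :
    ∑ i, ∑ j, X i j ^ 2 = (Xᵀ * X).trace := by
  simp only [trace, diag_apply, mul_apply, transpose_apply, sq]
  exact Finset.sum_comm

variable [DecidableEq r] {U K : Matrix n r ℝ}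

lemma whitenedAlignment_le (hU : Uᵀ * U = 1) : whitenedAlignment U K ≤ 1 + Kᵀ * K := by
  have h : 1 + Kᵀ * K - whitenedAlignment U K = (U - K)ᴴ * (U - K) := by
    rw [whitenedAlignment, conjTranspose_eq_transpose_of_trivial, transpose_sub, Matrix.sub_mul,
      Matrix.mul_sub, Matrix.mul_sub, hU]
    abel
  rw [← sub_nonneg, h]
  exact (posSemidef_conjTranspose_mul_self _).nonneg

lemma whitenedResidual_transpose_mul_self (hU : Uᵀ * U = 1) :
    (whitenedResidual U K)ᵀ * whitenedResidual U K = (whitenedResidual U K)ᵀ * K := by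
  have hRU : (whitenedResidual U K)ᵀ * U = 0 := by
    simp [whitenedResidual, transpose_sub, transpose_mul, Matrix.sub_mul, Matrix.mul_assoc, hU]
  nth_rw 2 [whitenedResidual]
  rw [Matrix.mul_sub, ← Matrix.mul_assoc, hRU, Matrix.zero_mul, sub_zero]

lemma whitenedResidual_transpose_mul_self_eq_sub (hU : Uᵀ * U = 1) :
    (whitenedResidual U K)ᵀ * whitenedResidual U K = Kᵀ * K - (Uᵀ * K)ᵀ * (Uᵀ * K) := by
  rw [whitenedResidual_transpose_mul_self hU]
  simp [whitenedResidual, transpose_sub, transpose_mul, Matrix.sub_mul, Matrix.mul_assoc]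

variable {U : ℝ → Matrix n r ℝ} {t : ℝ}

lemma hasMatrixDerivAt_transpose_mul (hU : HasMatrixDerivAt U (whitenedResidual (U t) K) t)
    (horth : (U t)ᵀ * U t = 1) :
    HasMatrixDerivAt (fun s => (U s)ᵀ * K)
      ((whitenedResidual (U t) K)ᵀ * whitenedResidual (U t) K) t := by
  rw [whitenedResidual_transpose_mul_self horth]
  exact hU.transpose.mul_const K

lemma hasMatrixDerivAt_whitenedAlignment
    (hU : HasMatrixDerivAt U (whitenedResidual (U t) K) t) (horth : (U t)ᵀ * U t = 1) :
    HasMatrixDerivAt (fun s => whitenedAlignment (U s) K)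
      ((2 : ℝ) • ((whitenedResidual (U t) K)ᵀ * whitenedResidual (U t) K)) t := by
  have hN := hasMatrixDerivAt_transpose_mul hU horth
  convert hN.transpose.add hN using 1
  · ext s : 1
    simp [whitenedAlignment, transpose_mul]
  · simp [transpose_mul, two_smul]

lemma hasDerivAt_sum_sq_whitenedResidual
    (hU : ∀ t, HasMatrixDerivAt U (whitenedResidual (U t) K) t)
    (horth : ∀ t, (U t)ᵀ * U t = 1) (t : ℝ) :
    HasDerivAt (fun s => ∑ i, ∑ j, whitenedResidual (U s) K i j ^ 2)
      (-(whitenedAlignment (U t) K *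
        ((whitenedResidual (U t) K)ᵀ * whitenedResidual (U t) K)).trace) t := by
  have hN := hasMatrixDerivAt_transpose_mul (hU t) (horth t)
  have hloss : (fun s => ∑ i, ∑ j, whitenedResidual (U s) K i j ^ 2) =
      fun s => (Kᵀ * K).trace - (((U s)ᵀ * K)ᵀ * ((U s)ᵀ * K)).trace := by
    ext s
    rw [sum_sq_eq_trace_transpose_mul_self, whitenedResidual_transpose_mul_self_eq_sub (horth s),
      trace_sub]
  rw [hloss]
  refine ((hN.transpose.mul hN).trace.const_sub _).congr_deriv ?_
  rw [neg_inj, whitenedAlignment, Matrix.add_mul, trace_add, trace_add, add_comm]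
  simp only [transpose_mul, transpose_transpose]
  rw [trace_mul_comm ((whitenedResidual (U t) K)ᵀ * whitenedResidual (U t) K)]

theorem integral_pos_part_deriv_le
    (hU : ∀ t, HasMatrixDerivAt U (whitenedResidual (U t) K) t)
    (horth : ∀ t, (U t)ᵀ * U t = 1) {μ : ℝ} (hμ : μ ≤ 0)
    (hμA : algebraMap ℝ _ μ ≤ whitenedAlignment (U 0) K) {ℓ : ℝ → ℝ}
    (hℓ : ∀ t, ℓ t = ∑ i, ∑ j, whitenedResidual (U t) K i j ^ 2) {T : ℝ} (hT : 0 ≤ T)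
    (hint : IntervalIntegrable (fun t => deriv ℓ t * if 0 ≤ deriv ℓ t then 1 else 0) volume 0 T) :
    ∫ t in 0..T, deriv ℓ t * (if 0 ≤ deriv ℓ t then 1 else 0) ≤ Fintype.card r * μ ^ 2 := by
  have hderiv : ∀ t, deriv ℓ t = -(whitenedAlignment (U t) K *
      ((whitenedResidual (U t) K)ᵀ * whitenedResidual (U t) K)).trace := fun t => by
    rw [funext hℓ]
    exact (hasDerivAt_sum_sq_whitenedResidual hU horth t).deriv
  have hKK : (1 + Kᵀ * K).IsHermitian := by
    simpa [conjTranspose_eq_transpose_of_trivial] using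
      isHermitian_one.add (isHermitian_conjTranspose_mul_self K)
  obtain ⟨Λ, hμΛ, hΛ⟩ := hKK.exists_le_algebraMap μ
  refine integral_le_card_mul_sq (fun t => hasMatrixDerivAt_whitenedAlignment (hU t) (horth t))
    (fun t => whitenedAlignment_isHermitian _ _) (fun t => ?_) hμ hμΛ hμA
    (fun t => (whitenedAlignment_le (horth t)).trans hΛ) hT hint (fun t => ?_)
  · simpa [conjTranspose_eq_transpose_of_trivial] using
      (posSemidef_conjTranspose_mul_self (whitenedResidual (U t) K)).nonneg
  · rw [← hderiv]
    split_ifs <;> simp_all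

end Whitened

section Flow

variable {m n r : Type*} [Fintype n] [Fintype r] [DecidableEq r]

lemma transpose_mul_sub_mul_inv_mul_eq_zero {Z : Matrix n r ℝ} (hZ : IsUnit (Zᵀ * Z))
    (Y : Matrix n m ℝ) : Zᵀ * (Y - Z * ((Zᵀ * Z)⁻¹ * Zᵀ * Y)) = 0 := by
  rw [Matrix.mul_sub, ← Matrix.mul_assoc, Matrix.mul_assoc _ Zᵀ Y,
    mul_nonsing_inv_cancel_left _ _ ((isUnit_iff_isUnit_det _).1 hZ), sub_self]

theorem gram_eq_of_hasMatrixDerivAt [Fintype m] {Z : ℝ → Matrix n r ℝ} {Y : Matrix n m ℝ}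
    {C : Matrix r m ℝ}
    (hZ : ∀ t, HasMatrixDerivAt Z ((Y - Z t * (((Z t)ᵀ * Z t)⁻¹ * (Z t)ᵀ * Y)) * Cᵀ) t)
    (h0 : IsUnit ((Z 0)ᵀ * Z 0)) (t : ℝ) : (Z t)ᵀ * Z t = (Z 0)ᵀ * Z 0 := by
  have hG := fun t => ((hZ t).transpose).mul (hZ t)
  have hdet : Continuous fun t => ((Z t)ᵀ * Z t).det :=
    (HasMatrixDerivAt.continuous hG).matrix_det
  -- The normal equations only hold where `ZᵀZ` is invertible, so the Gram matrix is shown to be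
  -- locally constant near its own level set, and then constant by connectedness.
  refine HasMatrixDerivAt.eq_of_deriv_eq_zero_of_isOpen (s := {t | ((Z t)ᵀ * Z t).det ≠ 0}) hG
    (isOpen_compl_singleton.preimage hdet) (fun t ht => ?_) (fun t ht => ?_) t
  · simpa [ht] using ((isUnit_iff_isUnit_det _).1 h0).ne_zero
  · have h := transpose_mul_sub_mul_inv_mul_eq_zero
      ((isUnit_iff_isUnit_det _).2 (isUnit_iff_ne_zero.2 ht)) Y
    generalize Y - Z t * (((Z t)ᵀ * Z t)⁻¹ * (Z t)ᵀ * Y) = E at h ⊢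
    have h' : Eᵀ * Z t = 0 := by simpa using congrArg transpose h
    rw [transpose_mul, Matrix.mul_assoc, h', ← Matrix.mul_assoc, h, Matrix.mul_zero,
      Matrix.zero_mul, add_zero]

lemma isUnit_det_of_mul_self_eq_inv {G S : Matrix r r ℝ} (hG : IsUnit G.det)
    (hS : S * S = G⁻¹) : IsUnit S.det :=
  isUnit_det_of_right_inverse (B := S * G) (by rw [← Matrix.mul_assoc, hS, nonsing_inv_mul _ hG])

variable {Z : Matrix n r ℝ} {S : Matrix r r ℝ}

lemma transpose_mul_self_eq_one_of_mul_self_eq_inv (hS : S.IsSymm) (hZ : IsUnit (Zᵀ * Z).det)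
    (hSsq : S * S = (Zᵀ * Z)⁻¹) : (Z * S)ᵀ * (Z * S) = 1 := by
  have hS_det := isUnit_det_of_mul_self_eq_inv hZ hSsq
  calc (Z * S)ᵀ * (Z * S) = S⁻¹ * (S * S * (Zᵀ * Z)) * S := by
        simp only [transpose_mul, hS.eq, ← Matrix.mul_assoc, nonsing_inv_mul _ hS_det,
          Matrix.one_mul]
    _ = 1 := by rw [hSsq, nonsing_inv_mul _ hZ, Matrix.mul_one, nonsing_inv_mul _ hS_det]

lemma sub_mul_inv_mul_mul_eq_whitenedResidual [Fintype m] (hS : S.IsSymm)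
    (hSsq : (Zᵀ * Z)⁻¹ = S * S)
    (Y : Matrix n m ℝ) (C : Matrix r m ℝ) :
    (Y - Z * ((Zᵀ * Z)⁻¹ * Zᵀ * Y)) * Cᵀ * S = whitenedResidual (Z * S) (Y * Cᵀ * S) := by
  simp [hSsq, whitenedResidual, transpose_mul, hS.eq, Matrix.mul_assoc, Matrix.sub_mul]

end Flow

end FeedbackAlignment

open FeedbackAlignment

/-- Under FA* dynamics with `Z(0)` full column rank, the total
increase of the loss `ℓ(t) = ‖(Y − Ŷ(t))Cᵀ (Z(t)ᵀZ(t))^{-1/2}‖_F²` is bounded: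
for all `T ≥ 0`, `∫₀ᵀ (dℓ/dt)·𝟙[dℓ/dt ≥ 0] dt ≤ r·λᵣ(A(0))²·λ₁(Z(0)ᵀZ(0))²`.
Here `S` is the PSD square root of `(Z(0)ᵀZ(0))⁻¹` (recall `ZᵀZ` is constant
along the flow), `A` is the alignment matrix, `λᵣ` the minimum and `λ₁` the
maximum eigenvalue. -/
theorem stmt15 (n m r : ℕ)
    (Y : Matrix (Fin n) (Fin m) ℝ) (C : Matrix (Fin r) (Fin m) ℝ)
    (Z : ℝ → Matrix (Fin n) (Fin r) ℝ)
    (hZ0 : IsUnit ((Z 0)ᵀ * Z 0))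
    (W : ℝ → Matrix (Fin r) (Fin m) ℝ)
    (hW : ∀ t, W t = ((Z t)ᵀ * Z t)⁻¹ * (Z t)ᵀ * Y)
    (R : ℝ → Matrix (Fin n) (Fin r) ℝ)
    (hR : ∀ t, R t = (Y - Z t * W t) * Cᵀ)
    (A : ℝ → Matrix (Fin r) (Fin r) ℝ)
    (hA : ∀ t, A t = ((Z t)ᵀ * Z t)⁻¹ * C * (W t)ᵀ + W t * Cᵀ * ((Z t)ᵀ * Z t)⁻¹)
    (hdyn : ∀ t : ℝ, ∀ i j, HasDerivAt (fun s => Z s i j) ((R t) i j) t)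
    (S : Matrix (Fin r) (Fin r) ℝ) (hS : S.PosSemidef)
    (hSsq : S * S = (((Z 0)ᵀ * Z 0))⁻¹)
    (ℓ : ℝ → ℝ) (hℓ : ∀ t, ℓ t = ∑ i, ∑ j, ((R t * S) i j) ^ 2)
    (hA0Herm : (A 0).IsHermitian) (hZ0Herm : (((Z 0)ᵀ * Z 0)).IsHermitian)
    (lamr lam1 : ℝ)
    (hlamr : lamr = ⨅ i, hA0Herm.eigenvalues i)
    (hlam1 : lam1 = ⨆ i, hZ0Herm.eigenvalues i)
    (hint : ∀ T : ℝ, IntervalIntegrable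
      (fun t => deriv ℓ t * (if 0 ≤ deriv ℓ t then 1 else 0)) volume 0 T) :
    ∀ T : ℝ, 0 ≤ T →
      (∫ t in (0:ℝ)..T, deriv ℓ t * (if 0 ≤ deriv ℓ t then 1 else 0))
        ≤ r * lamr ^ 2 * lam1 ^ 2 := by
  intro T hT
  have hR_lsq : ∀ t, R t = (Y - Z t * (((Z t)ᵀ * Z t)⁻¹ * (Z t)ᵀ * Y)) * Cᵀ := fun t => by
    rw [hR, hW]
  have hgram := gram_eq_of_hasMatrixDerivAt (fun t => hR_lsq t ▸ hdyn t) hZ0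
  have hgram0 := (isUnit_iff_isUnit_det _).1 hZ0
  have hS_symm : S.IsSymm := isHermitian_iff_isSymm.1 hS.1
  have hRS : ∀ t, R t * S = whitenedResidual (Z t * S) (Y * Cᵀ * S) := fun t => by
    rw [hR_lsq, sub_mul_inv_mul_mul_eq_whitenedResidual hS_symm (by rw [hgram, hSsq])]
  have hA0 : A 0 = S * whitenedAlignment (Z 0 * S) (Y * Cᵀ * S) * S := by
    simp [hA, hW, ← hSsq, whitenedAlignment, transpose_mul, hS_symm.eq, Matrix.mul_assoc,
      Matrix.add_mul, Matrix.mul_add]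
  have hlam1_nonneg : 0 ≤ lam1 := hlam1 ▸ Real.iSup_nonneg (by
    simpa [conjTranspose_eq_transpose_of_trivial] using
      (posSemidef_conjTranspose_mul_self (Z 0)).eigenvalues_nonneg)
  have hμA := algebraMap_min_mul_le hS.1.isSelfAdjoint (isUnit_det_of_mul_self_eq_inv hgram0 hSsq)
    (hA0 ▸ hlamr ▸ hA0Herm.algebraMap_iInf_eigenvalues_le) (b := lam1) (by
      rw [hSsq, nonsing_inv_nonsing_inv _ hgram0, hlam1]
      exact hZ0Herm.le_algebraMap_iSup_eigenvalues)
  calc _ ≤ r * (min lamr 0 * lam1) ^ 2 := by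
        simpa using integral_pos_part_deriv_le (U := fun t => Z t * S)
          (fun t => hRS t ▸ (show HasMatrixDerivAt Z (R t) t from hdyn t).mul_const S)
          (fun t => transpose_mul_self_eq_one_of_mul_self_eq_inv hS_symm (hgram t ▸ hgram0)
            (hgram t ▸ hSsq))
          (mul_nonpos_of_nonpos_of_nonneg (min_le_right _ _) hlam1_nonneg) hμA
          (fun t => by rw [hℓ, hRS]) hT (hint T)
    _ ≤ r * lamr ^ 2 * lam1 ^ 2 := by
      have : min lamr 0 ^ 2 ≤ lamr ^ 2 := by rcases le_total lamr 0 with h | h <;> simp [h]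
      rw [mul_pow, ← mul_assoc]
      gcongr
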